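/- Let G be a graph and χ : V(G) → {R, G, B} a proper 3-coloring. For each edge (u,v), in the combined gadget graph X_u ∪ X_v with switch edges removed and cross edges {(s_u, s_v)} ∪ {(u_i, v_j) : i ≠ j, i,j ∈ {R,G,B}} added, there exists a perfect matching that uses the edges (s_u, s_v) and (u_{χ(u)}, v_{χ(v)}). -/

import Mathlib

/-- Vertices of one gadget: two cycles of length `3l`, three interface vertices, one switch. -/
abbrev GadgetV (l : ℕ) := (Fin (3 * l) ⊕ Fin (3 * l)) ⊕ (Fin 3 ⊕ Unit)

/-- Adjacency along a cycle on `Fin n`. -/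
def cycAdj (n : ℕ) (i j : Fin n) : Prop :=
  ((j : ℕ) = (i : ℕ) + 1) ∨ ((i : ℕ) = n - 1 ∧ (j : ℕ) = 0)

/-- Edges of the combined test-state gadget `X_u ∪ X_v` for the edge `(u,v)`
(`false` is the `u`-copy, `true` the `v`-copy): within each copy, the two cycles
and the interface-to-cycle edges (the switch edges are removed); across the
copies, the edge `(s_u, s_v)` and the edges `(u_i, v_j)` for `i ≠ j`. -/
def testRel (l : ℕ) : Bool × GadgetV l → Bool × GadgetV l → Prop
  | (b, .inl (.inl i)), (b', .inl (.inl j)) => b = b' ∧ cycAdj (3 * l) i j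
  | (b, .inl (.inr i)), (b', .inl (.inr j)) => b = b' ∧ cycAdj (3 * l) i j
  | (b, .inr (.inl i)), (b', .inl (.inl j)) => b = b' ∧ (j : ℕ) = (i : ℕ) * l
  | (b, .inr (.inl i)), (b', .inl (.inr j)) => b = b' ∧ (j : ℕ) = (i : ℕ) * l
  | (b, .inr (.inr _)), (b', .inr (.inr _)) => b ≠ b'
  | (b, .inr (.inl i)), (b', .inr (.inl j)) => b ≠ b' ∧ i ≠ j
  | _, _ => False

def testGraph (l : ℕ) : SimpleGraph (Bool × GadgetV l) := SimpleGraph.fromRel (testRel l)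

/-! A perfect matching is the same as a fixed-point-free involution moving every vertex along
an edge. In the copy of colour `c`, the switch and `u_c` are matched across the two copies,
`u_{c+1}` and `u_{c+2}` are matched into the two cycles at their distinguished vertices, and
what remains of each cycle, an odd cycle minus one vertex, is a path with an even number of
vertices, matched along itself. -/

theorem Fin.three_eq_or_eq_add_one_or_eq_add_two (c i : Fin 3) :
    i = c ∨ i = c + 1 ∨ i = c + 2 := by
  revert c i; decide

namespace SimpleGraph

theorem exists_isPerfectMatching_of_involutive {V : Type*} {G : SimpleGraph V} {f : V → V}
    (hf : Function.Involutive f) (hadj : ∀ v, G.Adj v (f v)) :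
    ∃ M : G.Subgraph, M.IsPerfectMatching ∧ ∀ v, M.Adj v (f v) := by
  let M : G.Subgraph :=
    { verts := Set.univ
      Adj := fun v w => f v = w
      adj_sub := by rintro v _ rfl; exact hadj v
      edge_vert := fun _ => trivial
      symm := ⟨by rintro v _ rfl; exact hf v⟩ }
  refine ⟨M, Subgraph.isPerfectMatching_iff.mpr fun v => ⟨f v, rfl, fun _ h => Eq.symm h⟩,
    fun _ => rfl⟩

end SimpleGraph

section OddCycle

/-- The partner of `j` in the perfect matching of the cycle on `Fin n` with the vertex `r`
removed, which pairs `r + 1` with `r + 2`, `r + 3` with `r + 4`, … (indices mod `n`). -/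
def oddCycleMate {n : ℕ} (r : ℕ) (j : Fin n) : Fin n :=
  ⟨if (if r ≤ j then j - r else j + n - r) % 2 = 1 then
      (if (j : ℕ) = n - 1 then 0 else j + 1)
    else (if (j : ℕ) = 0 then n - 1 else j - 1),
    by have := j.isLt; split_ifs <;> first | contradiction | omega⟩

variable {n r : ℕ} {j : Fin n}

theorem oddCycleMate_ne_self (hn : Odd n) (hr : r < n) (hj : (j : ℕ) ≠ r) :
    oddCycleMate r j ≠ j := by
  obtain ⟨k, rfl⟩ := hn
  have := j.isLt
  simp only [oddCycleMate, ne_eq, Fin.ext_iff]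
  split_ifs <;> first | contradiction | omega

theorem oddCycleMate_val_ne (hn : Odd n) (hr : r < n) (hj : (j : ℕ) ≠ r) :
    (oddCycleMate r j : ℕ) ≠ r := by
  obtain ⟨k, rfl⟩ := hn
  have := j.isLt
  simp only [oddCycleMate]
  split_ifs <;> first | contradiction | omega

theorem oddCycleMate_oddCycleMate (hn : Odd n) (hr : r < n) (hj : (j : ℕ) ≠ r) :
    oddCycleMate r (oddCycleMate r j) = j := by
  obtain ⟨k, rfl⟩ := hn
  have := j.isLt
  simp only [oddCycleMate, Fin.ext_iff]
  split_ifs <;> first | contradiction | omega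

theorem cycAdj_oddCycleMate (hn : Odd n) (hr : r < n) (hj : (j : ℕ) ≠ r) :
    cycAdj n j (oddCycleMate r j) ∨ cycAdj n (oddCycleMate r j) j := by
  obtain ⟨k, rfl⟩ := hn
  have := j.isLt
  simp only [cycAdj, oddCycleMate]
  split_ifs <;> first | contradiction | omega

end OddCycle

section Gadget

variable {l : ℕ}

/-- Within one copy of the gadget with colour `c`: `u_{c+1}` is matched to the first cycle
at position `(c + 1) l` and `u_{c+2}` to the second one at `(c + 2) l`, the rest of each cycle
by `oddCycleMate`; the switch and `u_c` are left fixed. -/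
def gadgetMate (hl : 0 < l) (c : Fin 3) : GadgetV l → GadgetV l
  | .inl (.inl j) =>
    if (j : ℕ) = (c + 1 : Fin 3) * l then .inr (.inl (c + 1))
    else .inl (.inl (oddCycleMate ((c + 1 : Fin 3) * l) j))
  | .inl (.inr j) =>
    if (j : ℕ) = (c + 2 : Fin 3) * l then .inr (.inl (c + 2))
    else .inl (.inr (oddCycleMate ((c + 2 : Fin 3) * l) j))
  | .inr (.inl i) =>
    if i = c + 1 then .inl (.inl ⟨i * l, Nat.mul_lt_mul_of_pos_right i.isLt hl⟩)
    else if i = c + 2 then .inl (.inr ⟨i * l, Nat.mul_lt_mul_of_pos_right i.isLt hl⟩)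
    else .inr (.inl i)
  | .inr (.inr u) => .inr (.inr u)

theorem gadgetMate_involutive (hl : Odd l) (c : Fin 3) :
    Function.Involutive (gadgetMate hl.pos c) := by
  have hodd : Odd (3 * l) := Nat.odd_mul.mpr ⟨by decide, hl⟩
  have hne : c + 1 ≠ c ∧ c + 2 ≠ c ∧ c + 2 ≠ c + 1 := by revert c; decide
  have hlt (i : Fin 3) : (i : ℕ) * l < 3 * l := Nat.mul_lt_mul_of_pos_right i.isLt hl.pos
  rintro ((j | j) | (i | u))
  · by_cases hj : (j : ℕ) = (c + 1 : Fin 3) * l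
    · simp [gadgetMate, hj, Fin.ext_iff]
    · simp [gadgetMate, hj, oddCycleMate_val_ne hodd (hlt _) hj,
        oddCycleMate_oddCycleMate hodd (hlt _) hj]
  · by_cases hj : (j : ℕ) = (c + 2 : Fin 3) * l
    · simp [gadgetMate, hj, Fin.ext_iff, hne]
    · simp [gadgetMate, hj, oddCycleMate_val_ne hodd (hlt _) hj,
        oddCycleMate_oddCycleMate hodd (hlt _) hj]
  · rcases Fin.three_eq_or_eq_add_one_or_eq_add_two c i with rfl | rfl | rfl
    · simp [gadgetMate]
    · simp [gadgetMate]
    · simp [gadgetMate, hne]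
  · rfl

theorem testGraph_adj_gadgetMate (hl : Odd l) (c : Fin 3) (b : Bool) {x : GadgetV l}
    (hs : x ≠ .inr (.inr ())) (hc : x ≠ .inr (.inl c)) :
    (testGraph l).Adj (b, x) (b, gadgetMate hl.pos c x) := by
  have hodd : Odd (3 * l) := Nat.odd_mul.mpr ⟨by decide, hl⟩
  have hlt (i : Fin 3) : (i : ℕ) * l < 3 * l := Nat.mul_lt_mul_of_pos_right i.isLt hl.pos
  rw [testGraph, SimpleGraph.fromRel_adj]
  rcases x with (j | j) | (i | u)
  · by_cases hj : (j : ℕ) = (c + 1 : Fin 3) * l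
    · simp [gadgetMate, hj, testRel]
    · simpa [gadgetMate, hj, testRel, oddCycleMate_ne_self hodd (hlt _) hj, Ne.symm]
        using cycAdj_oddCycleMate hodd (hlt _) hj
  · by_cases hj : (j : ℕ) = (c + 2 : Fin 3) * l
    · simp [gadgetMate, hj, testRel]
    · simpa [gadgetMate, hj, testRel, oddCycleMate_ne_self hodd (hlt _) hj, Ne.symm]
        using cycAdj_oddCycleMate hodd (hlt _) hj
  · rcases Fin.three_eq_or_eq_add_one_or_eq_add_two c i with rfl | rfl | rfl
    · exact absurd rfl hc
    · simp [gadgetMate, testRel]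
    · simp [gadgetMate, testRel]
  · exact absurd rfl hs

/-- The perfect matching of the test configuration: the copy `b` has colour `cond b χv χu`,
its switch and its interface vertex of that colour are matched across, and everything else
inside the copy by `gadgetMate`. -/
def testMate (hl : 0 < l) (χu χv : Fin 3) : Bool × GadgetV l → Bool × GadgetV l
  | (b, x) =>
    if x = .inr (.inr ()) then (!b, x)
    else if x = .inr (.inl (cond b χv χu)) then (!b, .inr (.inl (cond (!b) χv χu)))
    else (b, gadgetMate hl (cond b χv χu) x)

theorem testMate_involutive (hl : Odd l) (χu χv : Fin 3) :
    Function.Involutive (testMate hl.pos χu χv) := by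
  rintro ⟨b, x⟩
  by_cases hs : x = .inr (.inr ())
  · simp [testMate, hs]
  by_cases hc : x = .inr (.inl (cond b χv χu))
  · simp [testMate, hc]
  have hinv := gadgetMate_involutive hl (cond b χv χu)
  have hs' : gadgetMate hl.pos (cond b χv χu) x ≠ .inr (.inr ()) := fun h =>
    hs (by rw [← hinv x, h]; rfl)
  have hc' : gadgetMate hl.pos (cond b χv χu) x ≠ .inr (.inl (cond b χv χu)) := fun h =>
    hc (by rw [← hinv x, h]; simp [gadgetMate])
  simp [testMate, hs, hc, hs', hc', hinv x]

theorem testGraph_adj_testMate (hl : Odd l) {χu χv : Fin 3} (hχ : χu ≠ χv)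
    (x : Bool × GadgetV l) : (testGraph l).Adj x (testMate hl.pos χu χv x) := by
  obtain ⟨b, x⟩ := x
  by_cases hs : x = .inr (.inr ())
  · cases b <;> simp [testMate, hs, testGraph, testRel]
  by_cases hc : x = .inr (.inl (cond b χv χu))
  · cases b <;> simp [testMate, hc, testGraph, testRel, hχ, Ne.symm hχ]
  simpa [testMate, hs, hc] using testGraph_adj_gadgetMate hl _ b hs hc

end Gadget

theorem stmt_16 (l : ℕ) (hl : Odd l) (χu χv : Fin 3) (hχ : χu ≠ χv) :
    ∃ M : (testGraph l).Subgraph, M.IsPerfectMatching ∧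
      M.Adj (false, .inr (.inr ())) (true, .inr (.inr ())) ∧
      M.Adj (false, .inr (.inl χu)) (true, .inr (.inl χv)) := by
  obtain ⟨M, hM, hadj⟩ := SimpleGraph.exists_isPerfectMatching_of_involutive
    (testMate_involutive hl χu χv) (testGraph_adj_testMate hl hχ)
  refine ⟨M, hM, ?_, ?_⟩
  · simpa [testMate] using hadj (false, .inr (.inr ()))
  · simpa [testMate] using hadj (false, .inr (.inl χu))
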